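/- arXiv:1110.1062 — 2 statements merged into one kernel-verified Lean document; each statement's English description precedes it below -/
import Mathlib

section
/- For n ≥ 1 and real z, (-1)^{n-1}/n! · ∑_{k=1}^n (n choose k) p_k(z) p_{n-k}(-z) = z(z+n)^{n-1}/n!, where p_m(x) = x(x-m)^{m-1} (p_0 = 1). -/
noncomputable def abelPoly (n : ℕ) (x : ℝ) : ℝ :=
  if n = 0 then 1 else x * (x - n) ^ (n - 1)

lemma hasDerivAt_abelPoly (k : ℕ) (x : ℝ) :
    HasDerivAt (abelPoly k) (k * abelPoly (k - 1) (x - 1)) x := by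
  rcases Nat.eq_zero_or_pos k with rfl | hk
  · simp only [Nat.cast_zero, zero_mul]
    exact (hasDerivAt_const x (1 : ℝ)).congr_of_eventuallyEq
      (Filter.Eventually.of_forall fun t => by simp [abelPoly])
  have h : abelPoly k = fun t : ℝ => t * (t - k) ^ (k - 1) := by
    funext t; simp [abelPoly, Nat.pos_iff_ne_zero.mp hk]
  rw [h]
  have h2 : HasDerivAt (fun t : ℝ => (t - (k : ℝ)) ^ (k - 1))
      (((k - 1 : ℕ) : ℝ) * (x - k) ^ (k - 1 - 1) * 1) x :=
    ((hasDerivAt_id x).sub_const _).pow _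
  have := (hasDerivAt_id x).mul h2
  refine this.congr_deriv ?_
  rcases Nat.lt_or_ge k 2 with hk2 | hk2
  · interval_cases k
    simp [abelPoly]
  · have hk1 : k - 1 ≠ 0 := by omega
    have e1 : k - 1 = (k - 2) + 1 := by omega
    have e2 : k - 1 - 1 = k - 2 := by omega
    have c1 : ((k - 1 : ℕ) : ℝ) = (k : ℝ) - 1 := by
      push_cast [Nat.cast_sub (by omega : 1 ≤ k)]; ring
    have c2 : ((k - 1 : ℕ) : ℝ) = (k : ℝ) - 1 := c1
    simp only [abelPoly, hk1, if_false, c1, e2]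
    rw [e1, pow_succ]
    simp only [id_eq]
    ring

lemma abel_sum (n : ℕ) (x y : ℝ) :
    ∑ k ∈ Finset.range (n + 1), (n.choose k : ℝ) * abelPoly k x * abelPoly (n - k) y =
      abelPoly n (x + y) := by
  induction n generalizing x y with
  | zero => simp [abelPoly]
  | succ n ih =>
    set f : ℝ → ℝ := fun t =>
      (∑ k ∈ Finset.range (n + 2),
        ((n + 1).choose k : ℝ) * abelPoly k t * abelPoly (n + 1 - k) y) -
        abelPoly (n + 1) (t + y) with hf
    have key : ∀ t : ℝ, HasDerivAt f 0 t := by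
      intro t
      have hsum : HasDerivAt
          (fun t => ∑ k ∈ Finset.range (n + 2),
            ((n + 1).choose k : ℝ) * abelPoly k t * abelPoly (n + 1 - k) y)
          (∑ k ∈ Finset.range (n + 2),
            ((n + 1).choose k : ℝ) * (k * abelPoly (k - 1) (t - 1)) * abelPoly (n + 1 - k) y)
          t := by
        apply HasDerivAt.fun_sum
        intro k _
        exact (((hasDerivAt_abelPoly k t).const_mul _).mul_const _)
      have hsumval : (∑ k ∈ Finset.range (n + 2),
            ((n + 1).choose k : ℝ) * (k * abelPoly (k - 1) (t - 1)) * abelPoly (n + 1 - k) y)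
          = (n + 1) * abelPoly n (t - 1 + y) := by
        rw [Finset.sum_range_succ']
        simp only [Nat.cast_zero, zero_mul, mul_zero, add_zero, Nat.add_sub_cancel]
        rw [← ih (t - 1) y, Finset.mul_sum]
        apply Finset.sum_congr rfl
        intro j _
        have hc : ((n + 1).choose (j + 1) : ℝ) * ((j : ℝ) + 1) = ((n : ℝ) + 1) * (n.choose j : ℝ) := by
          exact_mod_cast (Nat.add_one_mul_choose_eq n j).symm
        have hsub : n + 1 - (j + 1) = n - j := by omega
        rw [hsub]
        push_cast
        linear_combination hc * (abelPoly j (t - 1) * abelPoly (n - j) y)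
      have hg : HasDerivAt (fun t : ℝ => abelPoly (n + 1) (t + y))
          (((n + 1 : ℕ) : ℝ) * abelPoly n (t + y - 1)) t := by
        have := (hasDerivAt_abelPoly (n + 1) (t + y)).comp t ((hasDerivAt_id t).add_const y)
        exact this.congr_deriv (by simp)
      have := (hsum.congr_deriv hsumval).sub hg
      refine this.congr_deriv ?_
      push_cast
      ring_nf
    have hconst := is_const_of_deriv_eq_zero (fun t => (key t).differentiableAt)
      (fun t => (key t).deriv)
    have h0 : f 0 = 0 := by
      have hs : (∑ k ∈ Finset.range (n + 2),
          ((n + 1).choose k : ℝ) * abelPoly k 0 * abelPoly (n + 1 - k) y)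
          = abelPoly (n + 1) y := by
        rw [Finset.sum_eq_single 0]
        · simp [abelPoly]
        · intro k _ hk
          simp [abelPoly, hk]
        · simp
      simp [hf, hs]
    have := hconst x 0
    rw [h0] at this
    have : f x = 0 := this
    simpa [hf, sub_eq_zero] using this

/-- For `n ≥ 1` and real `z`:
`(-1)^(n-1)/n! ∑_{k=1}^n (n choose k) p_k(z) p_{n-k}(-z) = z(z+n)^(n-1)/n!`. -/
theorem stmt11 (n : ℕ) (hn : 1 ≤ n) (z : ℝ) :
    (-1 : ℝ) ^ (n - 1) / (Nat.factorial n) *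
        ∑ k ∈ Finset.Icc 1 n, (n.choose k : ℝ) * abelPoly k z * abelPoly (n - k) (-z) =
      z * (z + n) ^ (n - 1) / (Nat.factorial n) := by
  have habel := abel_sum n z (-z)
  have hzero : abelPoly n (z + -z) = 0 := by
    simp [abelPoly, Nat.pos_iff_ne_zero.mp hn]
  have hset : Finset.Icc 1 n = (Finset.range (n + 1)).erase 0 := by
    ext k; simp [Nat.lt_succ_iff]; omega
  have hsplit : (n.choose 0 : ℝ) * abelPoly 0 z * abelPoly (n - 0) (-z) +
      ∑ k ∈ Finset.Icc 1 n, (n.choose k : ℝ) * abelPoly k z * abelPoly (n - k) (-z) = 0 := by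
    rw [hset, Finset.add_sum_erase (Finset.range (n + 1))
      (fun k => (n.choose k : ℝ) * abelPoly k z * abelPoly (n - k) (-z))
      (by simp : 0 ∈ Finset.range (n + 1)), habel, hzero]
  have h1 : (n.choose 0 : ℝ) * abelPoly 0 z * abelPoly (n - 0) (-z) = abelPoly n (-z) := by
    simp [abelPoly]
  rw [h1] at hsplit
  have hsum : ∑ k ∈ Finset.Icc 1 n, (n.choose k : ℝ) * abelPoly k z * abelPoly (n - k) (-z)
      = -abelPoly n (-z) := by linarith
  rw [hsum]
  have hneg : (-1 : ℝ) ^ n = -(-1 : ℝ) ^ (n - 1) := by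
    rw [show n = (n - 1) + 1 by omega, pow_succ]
    ring_nf
    rw [show 1 + (n - 1) - 1 = n - 1 by omega]
  have hv : abelPoly n (-z) = (-1) ^ n * (z * (z + n) ^ (n - 1)) := by
    simp only [abelPoly, Nat.pos_iff_ne_zero.mp hn, if_false]
    have h2 : (-z - (n : ℝ)) ^ (n - 1) = (-1) ^ (n - 1) * (z + n) ^ (n - 1) := by
      rw [← neg_pow]; ring_nf
    rw [h2, hneg]; ring
  rw [hv]
  have hodd : (-1 : ℝ) ^ (n - 1) * (-1) ^ n = -1 := by
    rw [hneg, mul_neg, ← pow_add, ← two_mul, pow_mul]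
    norm_num
  rw [div_mul_eq_mul_div]
  congr 1
  linear_combination (-(z * (z + (n : ℝ)) ^ (n - 1))) * hodd
end

section
/- Let w = a w₁ a be a Catalan word where w₁ is Catalan. Then Q_w(x) = ∫_0^{1-x} Q_{w₁}(y) dy. -/
open MeasureTheory

/-- A word is pair-matched if each of its letters appears exactly twice. -/
def PairMatchedWord (w : List ℕ) : Prop := ∀ a ∈ w, w.count a = 2

/-- Reducibility to the empty word by successively deleting double letters. -/
inductive DoubleReduces : List ℕ → Prop
  | nil : DoubleReduces []
  | step (u v : List ℕ) (a : ℕ) : DoubleReduces (u ++ v) → DoubleReduces (u ++ a :: a :: v)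

/-- A Catalan word: pair-matched and reducible to the empty word by
successively deleting double letters. -/
def IsCatalanWord (w : List ℕ) : Prop := PairMatchedWord w ∧ DoubleReduces w

/-- The Wigner link function `L(a,b) = (min(a,b), max(a,b))`. -/
def wignerLink (a b : ℕ) : ℕ × ℕ := (min a b, max a b)

/-- The set `Π*(w)` of circuits `π : {0,…,2k} → {1,…,n}` with `π(0) = π(2k)`
such that `w[i] = w[j]` implies `L(π(i-1),π(i)) = L(π(j-1),π(j))`.  The letter
at the paper's position `i ∈ {1,…,2k}` is the list entry `w.get? (i-1)`. -/
def PiStar (w : List ℕ) (n : ℕ) : Set (ℕ → ℕ) :=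
  {π | (∀ t ≤ w.length, π t ∈ Finset.Icc 1 n) ∧ π 0 = π w.length ∧
    ∀ s t, s < w.length → t < w.length → w[s]? = w[t]? →
      wignerLink (π s) (π (s + 1)) = wignerLink (π t) (π (t + 1))}

/-- The set `S` of generating vertices of `w`: the vertex `0` together with
those `i` at which a letter occurs for the first time. -/
def genVertices (w : List ℕ) : Finset ℕ :=
  insert 0 (((Finset.range w.length).filter
    (fun t => ∀ s < t, w[s]? ≠ w[t]?)).image (· + 1))

/-- `φ` assigns to each vertex `j` the (unique) generating vertex `φ(j) ≤ j`
with `π(j) = π(φ(j))` for every circuit `π ∈ Π*(w)`. -/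
def IsPhi (w : List ℕ) (φ : ℕ → ℕ) : Prop :=
  ∀ j ≤ w.length, φ j ∈ genVertices w ∧ φ j ≤ j ∧
    ∀ (n : ℕ) (π : ℕ → ℕ), π ∈ PiStar w n → π j = π (φ j)
/-- Extend a vector indexed by the nonzero generating vertices to all of `ℕ`,
using the value `x` at the vertex `0`. -/
def extVal (w : List ℕ) (x : ℝ) (v : ↥((genVertices w).erase 0) → ℝ) (j : ℕ) : ℝ :=
  if h : j ∈ (genVertices w).erase 0 then v ⟨j, h⟩ else x

/-- `Q_w(x)`: the result of integrating out all the variables except `v₀ = x`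
in the volume integral `∫_{[0,1]^{k+1}} 1{v_{φ(i-1)} + v_{φ(i)} ≤ 1, i ∈ S∖{0}} dv_S`,
i.e. the volume of the slice at `v₀ = x` (so that `p_u(w) = ∫₀¹ Q_w(v₀) dv₀`). -/
noncomputable def Qword (w : List ℕ) (φ : ℕ → ℕ) (x : ℝ) : ℝ :=
  (volume {v : ↥((genVertices w).erase 0) → ℝ |
    (∀ i, v i ∈ Set.Icc (0:ℝ) 1) ∧
    ∀ i ∈ genVertices w, i ≠ 0 →
      extVal w x v (φ (i - 1)) + extVal w x v (φ i) ≤ 1}).toReal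

/-
Since `w` is Catalan, some circuit in `Π*(w)` moves to a new vertex at every first occurrence of
a letter: build it along the reduction of `w` to the empty word, turning each reinserted pair
`b b` into an excursion to a fresh vertex. This circuit separates the generating vertices, which
pins `φ` down: `φ(0) = 0` and `φ(j + 1) = φ₁(j) + 1`. The nonzero generating vertices of
`a w₁ a` are `1` and the shifted nonzero generating vertices of `w₁`, so at `v₀ = x` the
constraints of `Q_w` are `x + v₁ ≤ 1` together with those of `Q_{w₁}` with `v₁` in the role of
`v₀`. Integrating over `v₁ ∈ [0, 1 - x]` (Cavalieri) gives the formula.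
-/

lemma wignerLink_comm (i j : ℕ) : wignerLink i j = wignerLink j i := by
  simp [wignerLink, min_comm, max_comm]

lemma PairMatchedWord.not_mem_of_insertPair {u v : List ℕ} {a : ℕ}
    (h : PairMatchedWord (u ++ a :: a :: v)) : a ∉ u ++ v := by
  intro ha
  have := h a (by simp)
  have := List.count_pos_iff.mpr ha
  simp only [List.count_append, List.count_cons_self] at *
  omega

lemma PairMatchedWord.of_insertPair {u v : List ℕ} {a : ℕ}
    (h : PairMatchedWord (u ++ a :: a :: v)) : PairMatchedWord (u ++ v) := by
  intro b hb
  have hba : b ≠ a := by rintro rfl; exact h.not_mem_of_insertPair hb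
  have := h b (by simp at hb ⊢; tauto)
  simpa [List.count_append, List.count_cons, hba, Ne.symm hba] using this

lemma PairMatchedWord.not_mem_of_cons_append_singleton {w₁ : List ℕ} {a : ℕ}
    (h : PairMatchedWord (a :: (w₁ ++ [a]))) : a ∉ w₁ := by
  intro ha
  have := h a (by simp)
  have := List.count_pos_iff.mpr ha
  simp only [List.count_cons_self, List.count_append] at *
  omega

def IsFirstOccurrence (w : List ℕ) (t : ℕ) : Prop := ∀ s < t, w[s]? ≠ w[t]?

lemma mem_genVertices_iff {w : List ℕ} {i : ℕ} :
    i ∈ genVertices w ↔ i = 0 ∨ ∃ t < w.length, i = t + 1 ∧ IsFirstOccurrence w t := by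
  simp only [genVertices, Finset.mem_insert, Finset.mem_image, Finset.mem_filter,
    Finset.mem_range]
  constructor
  · rintro (rfl | ⟨t, ⟨ht, hfirst⟩, rfl⟩)
    exacts [Or.inl rfl, Or.inr ⟨t, ht, rfl, hfirst⟩]
  · rintro (rfl | ⟨t, ht, rfl, hfirst⟩)
    exacts [Or.inl rfl, Or.inr ⟨t, ⟨ht, hfirst⟩, rfl⟩]

lemma le_length_of_mem_genVertices {w : List ℕ} {i : ℕ} (hi : i ∈ genVertices w) :
    i ≤ w.length := by
  rcases mem_genVertices_iff.mp hi with rfl | ⟨t, ht, rfl, -⟩ <;> omega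

lemma mem_Icc_of_mem_piStar {w : List ℕ} {n : ℕ} {π : ℕ → ℕ} (hπ : π ∈ PiStar w n) {t : ℕ}
    (ht : t ≤ w.length) : 1 ≤ π t ∧ π t ≤ n :=
  Finset.mem_Icc.mp (hπ.1 t ht)

def IsFreshCircuit (w : List ℕ) (n : ℕ) (π : ℕ → ℕ) : Prop :=
  π ∈ PiStar w n ∧ ∀ t < w.length, IsFirstOccurrence w t → ∀ j ≤ t, π (t + 1) ≠ π j

lemma IsFreshCircuit.injOn {w : List ℕ} {n : ℕ} {π : ℕ → ℕ} (hπ : IsFreshCircuit w n π) :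
    Set.InjOn π (genVertices w) := by
  have fresh := hπ.2
  intro i hi j hj hij
  rw [Finset.mem_coe, mem_genVertices_iff] at hi hj
  rcases hi with rfl | ⟨s, hs, rfl, hfs⟩ <;> rcases hj with rfl | ⟨t, ht, rfl, hft⟩
  · rfl
  · exact absurd hij.symm (fresh t ht hft 0 (by omega))
  · exact absurd hij (fresh s hs hfs 0 (by omega))
  · rcases lt_trichotomy s t with h | rfl | h
    · exact absurd hij.symm (fresh t ht hft (s + 1) (by omega))
    · rfl
    · exact absurd hij (fresh s hs hfs (t + 1) (by omega))

/-- The index map from `u ++ a :: a :: v` back to `u ++ v`, where `k = u.length`. -/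
def dropTwo (k s : ℕ) : ℕ := if s ≤ k then s else s - 2

/-- A circuit of `u ++ a :: a :: v` built from one `π` of `u ++ v`, with `k = u.length`:
the pair `a a` becomes an excursion `π k → c → π k`. -/
def insertVertex (π : ℕ → ℕ) (k c : ℕ) (t : ℕ) : ℕ :=
  if t = k + 1 then c else π (dropTwo k t)

section InsertPair

variable {k s : ℕ}

lemma dropTwo_succ (h₀ : s ≠ k) (h₁ : s ≠ k + 1) : dropTwo k (s + 1) = dropTwo k s + 1 := by
  unfold dropTwo; split_ifs <;> omega

lemma dropTwo_le_dropTwo {t : ℕ} (ht : t ≠ k + 1) (hst : s ≤ t) :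
    dropTwo k s ≤ dropTwo k t := by
  unfold dropTwo; split_ifs <;> omega

lemma dropTwo_le {L : ℕ} (hk : k ≤ L) (hs : s ≤ L + 2) : dropTwo k s ≤ L := by
  unfold dropTwo; split_ifs <;> omega

lemma dropTwo_lt {L : ℕ} (hk : k ≤ L) (hs : s < L + 2) (h₀ : s ≠ k) (h₁ : s ≠ k + 1) :
    dropTwo k s < L := by
  unfold dropTwo; split_ifs <;> omega

lemma exists_dropTwo_eq_of_lt {r : ℕ} (hr : r < dropTwo k s) :
    ∃ r' < s, r' ≠ k ∧ r' ≠ k + 1 ∧ dropTwo k r' = r := by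
  unfold dropTwo at hr ⊢
  refine ⟨if r < k then r else r + 2, ?_⟩
  split_ifs at hr ⊢ <;> omega

variable {π : ℕ → ℕ} {c : ℕ}

lemma insertVertex_self : insertVertex π k c (k + 1) = c := if_pos rfl

lemma insertVertex_of_ne {t : ℕ} (ht : t ≠ k + 1) : insertVertex π k c t = π (dropTwo k t) :=
  if_neg ht

lemma insertVertex_link_of_ne (h₀ : s ≠ k) (h₁ : s ≠ k + 1) :
    wignerLink (insertVertex π k c s) (insertVertex π k c (s + 1)) =
      wignerLink (π (dropTwo k s)) (π (dropTwo k s + 1)) := by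
  rw [insertVertex_of_ne h₁, insertVertex_of_ne (by omega), dropTwo_succ h₀ h₁]

lemma insertVertex_link_of_eq (h : s = k ∨ s = k + 1) :
    wignerLink (insertVertex π k c s) (insertVertex π k c (s + 1)) = wignerLink (π k) c := by
  have hk : dropTwo k k = k := if_pos le_rfl
  have hk2 : dropTwo k (k + 2) = k := by simp [dropTwo]
  rcases h with rfl | rfl
  · rw [insertVertex_of_ne (by omega), hk, insertVertex_self]
  · rw [insertVertex_self, insertVertex_of_ne (by omega), hk2, wignerLink_comm]

variable {u v : List ℕ} {a : ℕ}

lemma getElem?_insertPair_of_ne (h₀ : s ≠ u.length) (h₁ : s ≠ u.length + 1) :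
    (u ++ a :: a :: v)[s]? = (u ++ v)[dropTwo u.length s]? := by
  unfold dropTwo
  rcases lt_or_gt_of_ne h₀ with h | h
  · rw [if_pos h.le, List.getElem?_append_left h, List.getElem?_append_left h]
  · obtain ⟨r, rfl⟩ : ∃ r, s = u.length + 2 + r := ⟨s - u.length - 2, by omega⟩
    rw [if_neg (by omega), List.getElem?_append_right (by omega),
      List.getElem?_append_right (by omega)]
    simp [show u.length + 2 + r - u.length = r + 2 by omega,
      show u.length + 2 + r - 2 - u.length = r by omega]

lemma getElem?_insertPair_of_eq (h : s = u.length ∨ s = u.length + 1) :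
    (u ++ a :: a :: v)[s]? = some a := by
  rcases h with rfl | rfl <;> simp

lemma IsFirstOccurrence.dropTwo (h₀ : s ≠ u.length) (h₁ : s ≠ u.length + 1)
    (hfirst : IsFirstOccurrence (u ++ a :: a :: v) s) :
    IsFirstOccurrence (u ++ v) (dropTwo u.length s) := by
  intro r hr
  obtain ⟨r', hr's, hr'₀, hr'₁, rfl⟩ := exists_dropTwo_eq_of_lt hr
  rw [← getElem?_insertPair_of_ne hr'₀ hr'₁, ← getElem?_insertPair_of_ne h₀ h₁]
  exact hfirst r' hr's

lemma getElem?_insertPair_ne_some (ha : a ∉ u ++ v) (h : ¬(s = u.length ∨ s = u.length + 1)) :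
    (u ++ a :: a :: v)[s]? ≠ some a := fun hs =>
  ha (List.mem_of_getElem?
    ((getElem?_insertPair_of_ne (not_or.mp h).1 (not_or.mp h).2).symm.trans hs))

variable {n : ℕ}

lemma length_insertPair : (u ++ a :: a :: v).length = (u ++ v).length + 2 := by
  simp; omega

lemma insertVertex_mem_piStar (hπ : π ∈ PiStar (u ++ v) n) (ha : a ∉ u ++ v) :
    insertVertex π u.length (n + 1) ∈ PiStar (u ++ a :: a :: v) (n + 1) := by
  set k := u.length
  have hk : k ≤ (u ++ v).length := by simp [k]
  refine ⟨fun t ht => ?_, ?_, fun s t hs ht hst => ?_⟩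
  · rw [length_insertPair] at ht
    rw [Finset.mem_Icc]
    by_cases htk : t = k + 1
    · rw [htk, insertVertex_self]; omega
    · have := mem_Icc_of_mem_piStar hπ (dropTwo_le hk ht)
      rw [insertVertex_of_ne htk]
      omega
  · have hL : dropTwo k ((u ++ v).length + 2) = (u ++ v).length := if_neg (by omega)
    rw [length_insertPair, insertVertex_of_ne (by omega), insertVertex_of_ne (by omega), hL]
    exact hπ.2.1
  · rw [length_insertPair] at hs ht
    by_cases hsk : s = k ∨ s = k + 1 <;> by_cases htk : t = k ∨ t = k + 1
    · rw [insertVertex_link_of_eq hsk, insertVertex_link_of_eq htk]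
    · exact absurd (hst.symm.trans (getElem?_insertPair_of_eq hsk))
        (getElem?_insertPair_ne_some ha htk)
    · exact absurd (hst.trans (getElem?_insertPair_of_eq htk))
        (getElem?_insertPair_ne_some ha hsk)
    · obtain ⟨hs₀, hs₁⟩ := not_or.mp hsk
      obtain ⟨ht₀, ht₁⟩ := not_or.mp htk
      rw [insertVertex_link_of_ne hs₀ hs₁, insertVertex_link_of_ne ht₀ ht₁]
      refine hπ.2.2 _ _ (dropTwo_lt hk hs hs₀ hs₁) (dropTwo_lt hk ht ht₀ ht₁) ?_
      rwa [← getElem?_insertPair_of_ne hs₀ hs₁, ← getElem?_insertPair_of_ne ht₀ ht₁]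

lemma IsFreshCircuit.insertPair (hπ : IsFreshCircuit (u ++ v) n π) (ha : a ∉ u ++ v) :
    IsFreshCircuit (u ++ a :: a :: v) (n + 1) (insertVertex π u.length (n + 1)) := by
  set k := u.length
  have hk : k ≤ (u ++ v).length := by simp [k]
  refine ⟨insertVertex_mem_piStar hπ.1 ha, fun t ht hfirst j hjt => ?_⟩
  rw [length_insertPair] at ht
  have hj : ∀ j ≤ (u ++ v).length + 2, j ≠ k + 1 → insertVertex π k (n + 1) j ≤ n :=
    fun j hj hjk => by
      rw [insertVertex_of_ne hjk]; exact (mem_Icc_of_mem_piStar hπ.1 (dropTwo_le hk hj)).2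
  by_cases htk : t = k
  · subst htk
    have := hj j (by omega) (by omega)
    rw [insertVertex_self]
    omega
  by_cases htk₁ : t = k + 1
  · refine absurd ?_ (hfirst k (by omega))
    rw [getElem?_insertPair_of_eq (.inl rfl), getElem?_insertPair_of_eq (.inr htk₁)]
  have hnext : insertVertex π k (n + 1) (t + 1) = π (dropTwo k t + 1) := by
    rw [insertVertex_of_ne (by omega), dropTwo_succ htk htk₁]
  by_cases hjk : j = k + 1
  · have := hj (t + 1) (by omega) (by omega)
    rw [hjk, insertVertex_self]
    omega
  rw [hnext, insertVertex_of_ne hjk]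
  exact hπ.2 _ (dropTwo_lt hk ht htk htk₁) (hfirst.dropTwo htk htk₁) _
    (dropTwo_le_dropTwo htk₁ hjt)

end InsertPair

lemma DoubleReduces.exists_isFreshCircuit {w : List ℕ} (hred : DoubleReduces w)
    (hpm : PairMatchedWord w) : ∃ n π, IsFreshCircuit w n π := by
  induction hred with
  | nil => exact ⟨1, fun _ => 1, ⟨by simp, rfl, by simp⟩, by simp⟩
  | step u v a _ ih =>
    obtain ⟨n, π, hπ⟩ := ih hpm.of_insertPair
    exact ⟨n + 1, _, hπ.insertPair hpm.not_mem_of_insertPair⟩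

lemma IsCatalanWord.exists_mem_piStar_injOn {w : List ℕ} (hw : IsCatalanWord w) :
    ∃ n π, π ∈ PiStar w n ∧ Set.InjOn π (genVertices w) := by
  obtain ⟨n, π, hπ⟩ := hw.2.exists_isFreshCircuit hw.1
  exact ⟨n, π, hπ.1, hπ.injOn⟩

section CycleWord

variable {w₁ : List ℕ} {a : ℕ}

lemma length_cons_append_singleton : (a :: (w₁ ++ [a])).length = w₁.length + 2 := by
  simp

lemma getElem?_cons_append_singleton_length :
    (a :: (w₁ ++ [a]))[w₁.length + 1]? = some a := by
  simp

lemma getElem?_cons_append_singleton_succ {s : ℕ} (hs : s < w₁.length) :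
    (a :: (w₁ ++ [a]))[s + 1]? = w₁[s]? := by
  simp [List.getElem?_append_left hs]

lemma shift_mem_piStar {n : ℕ} {π : ℕ → ℕ} (hπ : π ∈ PiStar (a :: (w₁ ++ [a])) n) :
    (fun t => π (t + 1)) ∈ PiStar w₁ n := by
  obtain ⟨hrange, hcirc, hlink⟩ := hπ
  rw [length_cons_append_singleton] at hrange hcirc hlink
  refine ⟨fun t ht => hrange (t + 1) (by omega), ?_, fun s t hs ht hst => ?_⟩
  · have h := hlink 0 (w₁.length + 1) (by omega) (by omega)
      (by rw [getElem?_cons_append_singleton_length]; rfl)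
    rw [← hcirc] at h
    simp only [wignerLink, Prod.mk.injEq, zero_add] at h
    change π 1 = π (w₁.length + 1)
    omega
  · exact hlink (s + 1) (t + 1) (by omega) (by omega) (by
      rwa [getElem?_cons_append_singleton_succ hs, getElem?_cons_append_singleton_succ ht])

lemma one_mem_genVertices {w : List ℕ} (hw : w ≠ []) : 1 ∈ genVertices w :=
  mem_genVertices_iff.mpr
    (.inr ⟨0, List.length_pos_iff.mpr hw, rfl, fun _ h => (Nat.not_lt_zero _ h).elim⟩)

lemma succ_mem_genVertices_cons_append_singleton (ha : a ∉ w₁) {m : ℕ}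
    (hm : m ∈ genVertices w₁) : m + 1 ∈ genVertices (a :: (w₁ ++ [a])) := by
  rcases mem_genVertices_iff.mp hm with rfl | ⟨t, ht, rfl, hfirst⟩
  · exact one_mem_genVertices (List.cons_ne_nil _ _)
  refine mem_genVertices_iff.mpr (.inr ⟨t + 1, by simp; omega, rfl, fun s hs => ?_⟩)
  rw [getElem?_cons_append_singleton_succ ht]
  rcases s with _ | s
  · exact fun h => ha (List.mem_of_getElem? h.symm)
  · rw [getElem?_cons_append_singleton_succ (by omega)]
    exact hfirst s (by omega)

lemma genVertices_cons_append_singleton_erase_zero (ha : a ∉ w₁) :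
    (genVertices (a :: (w₁ ++ [a]))).erase 0 =
      insert 1 (((genVertices w₁).erase 0).image (· + 1)) := by
  ext i
  simp only [Finset.mem_erase, Finset.mem_insert, Finset.mem_image]
  constructor
  · rintro ⟨hi0, hi⟩
    obtain ⟨t, ht, rfl, hfirst⟩ := (mem_genVertices_iff.mp hi).resolve_left hi0
    rcases t with _ | t
    · exact .inl rfl
    have ht' : t < w₁.length := by
      by_contra h
      rw [length_cons_append_singleton] at ht
      obtain rfl : t = w₁.length := by omega
      exact hfirst 0 (by omega) (by rw [getElem?_cons_append_singleton_length]; rfl)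
    refine .inr ⟨t + 1, ⟨by omega, mem_genVertices_iff.mpr (.inr ⟨t, ht', rfl, ?_⟩)⟩, rfl⟩
    intro s hs
    rw [← getElem?_cons_append_singleton_succ (a := a) (by omega),
      ← getElem?_cons_append_singleton_succ (a := a) ht']
    exact hfirst (s + 1) (by omega)
  · rintro (rfl | ⟨m, ⟨-, hm⟩, rfl⟩)
    · exact ⟨one_ne_zero, one_mem_genVertices (List.cons_ne_nil _ _)⟩
    · exact ⟨by omega, succ_mem_genVertices_cons_append_singleton ha hm⟩

end CycleWord

section Phi

variable {w : List ℕ} {φ : ℕ → ℕ}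

lemma IsPhi.map_zero (hφ : IsPhi w φ) : φ 0 = 0 :=
  Nat.le_zero.mp (hφ 0 (Nat.zero_le _)).2.1

lemma IsPhi.eq_of_injOn (hφ : IsPhi w φ) {n : ℕ} {π : ℕ → ℕ} (hπ : π ∈ PiStar w n)
    (hinj : Set.InjOn π (genVertices w)) {i j : ℕ} (hj : j ≤ w.length) (hi : i ∈ genVertices w)
    (hπij : π j = π i) : φ j = i := by
  obtain ⟨hφj, -, hπφ⟩ := hφ j hj
  exact hinj hφj hi ((hπφ n π hπ).symm.trans hπij)

lemma IsPhi.map_succ_of_cons_append_singleton {w₁ : List ℕ} {a : ℕ} {φ₁ : ℕ → ℕ}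
    (hcat : IsCatalanWord (a :: (w₁ ++ [a]))) (hφ : IsPhi (a :: (w₁ ++ [a])) φ)
    (hφ₁ : IsPhi w₁ φ₁) {j : ℕ} (hj : j ≤ w₁.length) : φ (j + 1) = φ₁ j + 1 := by
  obtain ⟨n, π, hπ, hinj⟩ := hcat.exists_mem_piStar_injOn
  obtain ⟨hφ₁j, -, hπφ₁⟩ := hφ₁ j hj
  exact hφ.eq_of_injOn hπ hinj (by rw [length_cons_append_singleton]; omega)
    (succ_mem_genVertices_cons_append_singleton hcat.1.not_mem_of_cons_append_singleton hφ₁j)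
    (hπφ₁ n _ (shift_mem_piStar hπ))

end Phi

noncomputable def optionEquivInsertSucc {S S₁ : Finset ℕ}
    (hS : S = insert 1 (S₁.image (· + 1))) (h0 : 0 ∉ S₁) : Option S₁ ≃ S :=
  Equiv.ofBijective (fun o => o.elim ⟨1, by simp [hS]⟩ fun m => ⟨m + 1, by simp [hS, m.2]⟩) <| by
    refine ⟨?_, fun ⟨i, hi⟩ => ?_⟩
    · rintro (_ | ⟨m, hm⟩) (_ | ⟨m', hm'⟩) h <;> simp only [Option.elim, Subtype.mk.injEq] at h
      · rfl
      · exact absurd hm' (by rwa [show m' = 0 by omega])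
      · exact absurd hm (by rwa [show m = 0 by omega])
      · simpa using h
    · rw [hS, Finset.mem_insert, Finset.mem_image] at hi
      rcases hi with rfl | ⟨m, hm, rfl⟩
      exacts [⟨none, rfl⟩, ⟨some ⟨m, hm⟩, rfl⟩]

namespace MeasurableEquiv

variable {ι ι₁ : Type*}

def prodPiOfOptionEquiv (α : Type*) [MeasurableSpace α] (e : Option ι₁ ≃ ι) :
    (ι₁ → α) × α ≃ᵐ (ι → α) :=
  (piOptionEquivProd fun _ => α).symm.trans (piCongrLeft (fun _ => α) e)

@[simp]
lemma prodPiOfOptionEquiv_apply_none {α : Type*} [MeasurableSpace α] (e : Option ι₁ ≃ ι)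
    (p : (ι₁ → α) × α) : prodPiOfOptionEquiv α e p (e none) = p.2 := by
  rw [prodPiOfOptionEquiv, trans_apply, piCongrLeft_apply_apply]; rfl

@[simp]
lemma prodPiOfOptionEquiv_apply_some {α : Type*} [MeasurableSpace α] (e : Option ι₁ ≃ ι)
    (p : (ι₁ → α) × α) (i : ι₁) : prodPiOfOptionEquiv α e p (e (some i)) = p.1 i := by
  rw [prodPiOfOptionEquiv, trans_apply, piCongrLeft_apply_apply]; rfl

lemma forall_prodPiOfOptionEquiv_apply {α : Type*} [MeasurableSpace α] (e : Option ι₁ ≃ ι)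
    (p : (ι₁ → α) × α) {P : α → Prop} :
    (∀ i, P (prodPiOfOptionEquiv α e p i)) ↔ P p.2 ∧ ∀ i, P (p.1 i) := by
  rw [← e.forall_congr_right, Option.forall]
  simp only [prodPiOfOptionEquiv_apply_none, prodPiOfOptionEquiv_apply_some]

lemma measurePreserving_prodPiOfOptionEquiv {α : Type*} [MeasureSpace α]
    [SigmaFinite (volume : Measure α)] [Fintype ι] [Fintype ι₁] (e : Option ι₁ ≃ ι) :
    MeasurePreserving (prodPiOfOptionEquiv α e) volume volume :=
  (volume_measurePreserving_piCongrLeft (fun _ => α) e).comp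
    ⟨(piOptionEquivProd fun _ => α).symm.measurable,
      Measure.pi_map_piOptionEquivProd fun _ => volume⟩

end MeasurableEquiv

open scoped ENNReal in
lemma toReal_volume_setOf_mem_Icc_and {β : Type*} [MeasureSpace β]
    [SFinite (volume : Measure β)] {R : ℝ → Set β}
    (hR : MeasurableSet {p : β × ℝ | p.1 ∈ R p.2}) (hfin : ∀ y, volume (R y) ≠ ∞)
    {a b : ℝ} (hab : a ≤ b) :
    (volume {p : β × ℝ | p.2 ∈ Set.Icc a b ∧ p.1 ∈ R p.2}).toReal =
      ∫ y in a..b, (volume (R y)).toReal := by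
  have hS : MeasurableSet {p : β × ℝ | p.2 ∈ Set.Icc a b ∧ p.1 ∈ R p.2} :=
    (measurable_snd measurableSet_Icc).inter hR
  have hslice : volume {p : β × ℝ | p.2 ∈ Set.Icc a b ∧ p.1 ∈ R p.2} =
      ∫⁻ y in Set.Icc a b, volume (R y) := by
    rw [Measure.volume_eq_prod, Measure.prod_apply_symm hS,
      ← lintegral_indicator measurableSet_Icc]
    congr 1 with y
    by_cases hy : y ∈ Set.Icc a b
    · simp only [Set.indicator_of_mem hy, Set.preimage_ofPred_eq, hy, true_and, Set.ofPred_mem_eq]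
    · simp only [Set.indicator_of_notMem hy, Set.preimage_ofPred_eq, hy, false_and,
        Set.ofPred_false, measure_empty]
  have hmeas : Measurable fun y => volume (R y) := measurable_measure_prodMk_right hR
  rw [hslice, intervalIntegral.integral_of_le hab, ← integral_Icc_eq_integral_Ioc,
    integral_toReal hmeas.aemeasurable (ae_of_all _ fun y => (hfin y).lt_top)]

abbrev QCoord (w : List ℕ) : Type := ↥((genVertices w).erase 0)

def qRegion (w : List ℕ) (φ : ℕ → ℕ) (x : ℝ) : Set (QCoord w → ℝ) :=
  {v | (∀ i, v i ∈ Set.Icc (0:ℝ) 1) ∧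
    ∀ i ∈ genVertices w, i ≠ 0 → extVal w x v (φ (i - 1)) + extVal w x v (φ i) ≤ 1}

lemma Qword_eq_toReal_volume_qRegion (w : List ℕ) (φ : ℕ → ℕ) (x : ℝ) :
    Qword w φ x = (volume (qRegion w φ x)).toReal :=
  rfl

section QRegion

variable {w : List ℕ} {φ : ℕ → ℕ}

lemma extVal_zero {x : ℝ} {v : QCoord w → ℝ} : extVal w x v 0 = x :=
  dif_neg (Finset.notMem_erase 0 _)

lemma measurable_extVal (j : ℕ) :
    Measurable fun p : (QCoord w → ℝ) × ℝ => extVal w p.2 p.1 j := by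
  unfold extVal
  split_ifs
  exacts [(measurable_pi_apply _).comp measurable_fst, measurable_snd]

lemma measurableSet_setOf_mem_qRegion :
    MeasurableSet {p : (QCoord w → ℝ) × ℝ | p.1 ∈ qRegion w φ p.2} := by
  change MeasurableSet ({p : (QCoord w → ℝ) × ℝ | ∀ i, p.1 i ∈ Set.Icc (0:ℝ) 1} ∩
    {p : (QCoord w → ℝ) × ℝ | ∀ i ∈ genVertices w, i ≠ 0 →
      extVal w p.2 p.1 (φ (i - 1)) + extVal w p.2 p.1 (φ i) ≤ 1})
  simp only [Set.ofPred_forall]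
  refine .inter (.iInter fun i => ?_) (.iInter fun i => .iInter fun _ => .iInter fun _ => ?_)
  · exact ((measurable_pi_apply i).comp measurable_fst) measurableSet_Icc
  · exact measurableSet_le ((measurable_extVal _).add (measurable_extVal _)) measurable_const

lemma volume_qRegion_le_one (x : ℝ) : volume (qRegion w φ x) ≤ 1 :=
  calc volume (qRegion w φ x)
      ≤ volume (Set.univ.pi fun _ : QCoord w => Set.Icc (0:ℝ) 1) :=
        measure_mono fun _ hv i _ => hv.1 i
    _ = 1 := by rw [volume_pi_pi]; simp [Real.volume_Icc]

end QRegion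

section CycleWordRegion

variable {w₁ : List ℕ} {a : ℕ} (ha : a ∉ w₁)
include ha

lemma forall_genVertices_cons_append_singleton {C : ℕ → Prop} :
    (∀ i ∈ genVertices (a :: (w₁ ++ [a])), i ≠ 0 → C i) ↔
      C 1 ∧ ∀ m ∈ genVertices w₁, m ≠ 0 → C (m + 1) := by
  have h := genVertices_cons_append_singleton_erase_zero ha
  simp only [Finset.ext_iff, Finset.mem_erase, Finset.mem_insert, Finset.mem_image] at h
  constructor
  · intro hC
    exact ⟨hC 1 ((h 1).mpr (.inl rfl)).2 one_ne_zero,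
      fun m hm hm0 => hC (m + 1) ((h _).mpr (.inr ⟨m, ⟨hm0, hm⟩, rfl⟩)).2 (by omega)⟩
  · rintro ⟨h1, hC⟩ i hi hi0
    rcases (h i).mp ⟨hi0, hi⟩ with rfl | ⟨m, ⟨hm0, hm⟩, rfl⟩
    exacts [h1, hC m hm hm0]

noncomputable def cycleWordCoordEquiv :
    Option (QCoord w₁) ≃ QCoord (a :: (w₁ ++ [a])) :=
  optionEquivInsertSucc (genVertices_cons_append_singleton_erase_zero ha)
    (Finset.notMem_erase 0 _)

lemma extVal_prodPiOfOptionEquiv {x y : ℝ} {v₁ : QCoord w₁ → ℝ} {m : ℕ}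
    (hm : m ∈ genVertices w₁) :
    extVal (a :: (w₁ ++ [a])) x
      (MeasurableEquiv.prodPiOfOptionEquiv ℝ (cycleWordCoordEquiv ha) (v₁, y)) (m + 1) =
      extVal w₁ y v₁ m := by
  rcases eq_or_ne m 0 with rfl | hm0
  · rw [extVal_zero, extVal, dif_pos (show 0 + 1 ∈ _ from (cycleWordCoordEquiv ha none).2)]
    exact MeasurableEquiv.prodPiOfOptionEquiv_apply_none _ (v₁, y)
  · have hm' : m ∈ (genVertices w₁).erase 0 := Finset.mem_erase.mpr ⟨hm0, hm⟩
    rw [extVal, extVal, dif_pos (show m + 1 ∈ _ from (cycleWordCoordEquiv ha (some ⟨m, hm'⟩)).2),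
      dif_pos hm']
    exact MeasurableEquiv.prodPiOfOptionEquiv_apply_some _ (v₁, y) ⟨m, hm'⟩

lemma prodPiOfOptionEquiv_mem_qRegion_iff {φ φ₁ : ℕ → ℕ} (hφ₀ : φ 0 = 0)
    (hφ : ∀ j ≤ w₁.length, φ (j + 1) = φ₁ j + 1) (hφ₁ : IsPhi w₁ φ₁) {x y : ℝ} (hx : 0 ≤ x)
    {v₁ : QCoord w₁ → ℝ} :
    MeasurableEquiv.prodPiOfOptionEquiv ℝ (cycleWordCoordEquiv ha) (v₁, y) ∈
        qRegion (a :: (w₁ ++ [a])) φ x ↔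
      y ∈ Set.Icc 0 (1 - x) ∧ v₁ ∈ qRegion w₁ φ₁ y := by
  simp only [qRegion, Set.mem_ofPred_eq, MeasurableEquiv.forall_prodPiOfOptionEquiv_apply,
    forall_genVertices_cons_append_singleton ha]
  set v := MeasurableEquiv.prodPiOfOptionEquiv ℝ (cycleWordCoordEquiv ha) (v₁, y)
  have hφ₁mem : ∀ j ≤ w₁.length, φ₁ j ∈ genVertices w₁ := fun j hj => (hφ₁ j hj).1
  have hconstr_one : extVal _ x v (φ (1 - 1)) + extVal _ x v (φ 1) = x + y := by
    rw [Nat.sub_self, hφ₀, extVal_zero, hφ 0 (Nat.zero_le _), hφ₁.map_zero,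
      extVal_prodPiOfOptionEquiv ha (hφ₁.map_zero ▸ hφ₁mem 0 (Nat.zero_le _)), extVal_zero]
  have hconstr_succ : ∀ m ∈ genVertices w₁, m ≠ 0 →
      extVal _ x v (φ (m + 1 - 1)) + extVal _ x v (φ (m + 1)) =
        extVal w₁ y v₁ (φ₁ (m - 1)) + extVal w₁ y v₁ (φ₁ m) := by
    intro m hm hm0
    have hmlen := le_length_of_mem_genVertices hm
    obtain ⟨m, rfl⟩ : ∃ k, m = k + 1 := ⟨m - 1, by omega⟩
    rw [Nat.add_sub_cancel, Nat.add_sub_cancel, hφ m (by omega), hφ (m + 1) hmlen,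
      extVal_prodPiOfOptionEquiv ha (hφ₁mem m (by omega)),
      extVal_prodPiOfOptionEquiv ha (hφ₁mem (m + 1) hmlen)]
  rw [hconstr_one]
  constructor
  · rintro ⟨⟨hy, hbox⟩, hxy, hcons⟩
    exact ⟨⟨hy.1, by linarith⟩, hbox, fun m hm hm0 => hconstr_succ m hm hm0 ▸ hcons m hm hm0⟩
  · rintro ⟨hy, hbox, hcons⟩
    exact ⟨⟨⟨hy.1, by linarith [hy.2]⟩, hbox⟩, by linarith [hy.2],
      fun m hm hm0 => (hconstr_succ m hm hm0).symm ▸ hcons m hm hm0⟩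

end CycleWordRegion

theorem stmt13_general (w w₁ : List ℕ) (a : ℕ) (hw : w = a :: (w₁ ++ [a]))
    (hcat : IsCatalanWord w)
    (φ φ₁ : ℕ → ℕ) (hφ : IsPhi w φ) (hφ₁ : IsPhi w₁ φ₁)
    (x : ℝ) (hx : x ∈ Set.Icc (0:ℝ) 1) :
    Qword w φ x = ∫ y in (0:ℝ)..(1 - x), Qword w₁ φ₁ y := by
  subst hw
  have ha := hcat.1.not_mem_of_cons_append_singleton
  have hG := MeasurableEquiv.measurePreserving_prodPiOfOptionEquiv (α := ℝ)
    (cycleWordCoordEquiv ha)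
  have hpre : MeasurableEquiv.prodPiOfOptionEquiv ℝ (cycleWordCoordEquiv ha) ⁻¹'
      qRegion _ φ x = {p | p.2 ∈ Set.Icc 0 (1 - x) ∧ p.1 ∈ qRegion w₁ φ₁ p.2} := by
    ext ⟨v₁, y⟩
    exact prodPiOfOptionEquiv_mem_qRegion_iff ha hφ.map_zero
      (fun j hj => hφ.map_succ_of_cons_append_singleton hcat hφ₁ hj) hφ₁ hx.1
  have hfin y : volume (qRegion w₁ φ₁ y) ≠ ⊤ :=
    ((volume_qRegion_le_one y).trans_lt ENNReal.one_lt_top).ne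
  rw [Qword_eq_toReal_volume_qRegion, ← hG.measure_preimage_equiv, hpre,
    toReal_volume_setOf_mem_Icc_and measurableSet_setOf_mem_qRegion hfin (by linarith [hx.2])]
  rfl

/-- If `w = a w₁ a` is Catalan with `w₁` Catalan, then
`Q_w(x) = ∫₀^{1-x} Q_{w₁}(y) dy`. -/
theorem stmt13 (w w₁ : List ℕ) (a : ℕ) (hw : w = a :: (w₁ ++ [a]))
    (hcat : IsCatalanWord w) (hcat₁ : IsCatalanWord w₁)
    (φ φ₁ : ℕ → ℕ) (hφ : IsPhi w φ) (hφ₁ : IsPhi w₁ φ₁)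
    (x : ℝ) (hx : x ∈ Set.Icc (0:ℝ) 1) :
    Qword w φ x = ∫ y in (0:ℝ)..(1 - x), Qword w₁ φ₁ y :=
  stmt13_general w w₁ a hw hcat φ φ₁ hφ hφ₁ x hx
end
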